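/- arXiv:2004.09962 — 6 statements merged into one kernel-verified Lean document; each statement's English description precedes it below -/
import Mathlib

section
/- The set of isometry classes of nonempty compact totally disconnected metric spaces that admit a loose embedding into the real line is residual (comeager) in the space M_0, where M_0 is the subset of the Gromov–Hausdorff space consisting of classes of totally disconnected compact metric spaces, equipped with the subspace topology. -/
/-!
Say a metric space has distinct distances if distinct pairs of distinct points are at distinct
distances. A finite metric space acquires distinct distances when each distance is raised by a tiny
generic amount, and its distinct distances are then at least some `γ > 0` apart; since finite nets
are Gromov–Hausdorff dense, such spaces are dense in `M₀`. A space within `min γ ε / 4` of one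
with gap `γ` has distinct distances on `ε`-far pairs, so the spaces lying in these open
neighbourhoods for every `ε = 1 / (n + 1)` form a dense `Gδ` of spaces with distinct distances.

For compact totally disconnected `X` with distinct distances, the maps `g ∈ C(X, ℝ)` under which
`ε`-far pairs keep distinct distances form an open dense set: near any `g₀` lies a map constant on
the pieces of a fine clopen partition, with values `tᵢ + s 3^κᵢ` for a small generic `s` (a sum of
two powers of `3` determines the exponents). By Baire, some `g` sends distinct pairs to distinct
distances, and is then a loose embedding.
-/

/-- A loose embedding between metric spaces: an injective continuous map preserving
equalities and inequalities of distances. -/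
def IsLooseEmbedding {X Y : Type*} [MetricSpace X] [MetricSpace Y] (f : X → Y) : Prop :=
  Function.Injective f ∧ Continuous f ∧
    ∀ x x' z z' : X, dist (f x) (f x') = dist (f z) (f z') ↔ dist x x' = dist z z'

open Set Filter Topology Metric Function GromovHausdorff

section DistinctDistances

variable {X Y : Type*}

def PairDistInjective [PseudoMetricSpace Y] (f : X → Y) : Prop :=
  ∀ ⦃x x' z z' : X⦄, x ≠ x' → dist (f x) (f x') = dist (f z) (f z') → s(x, x') = s(z, z')

abbrev DistinctDists (X : Type*) [PseudoMetricSpace X] : Prop :=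
  PairDistInjective (id : X → X)

/-- A quantitative form of `x ≠ x'` and `s(x, x') ≠ s(z, z')`. -/
def FarPairs [PseudoMetricSpace X] (ε : ℝ) (x x' z z' : X) : Prop :=
  ε ≤ dist x x' ∧ ε ≤ max (dist x z) (dist x' z') ∧ ε ≤ max (dist x z') (dist x' z)

theorem PairDistInjective.injective [MetricSpace Y] {f : X → Y} (hf : PairDistInjective f) :
    Injective f := by
  intro x x' h
  by_contra hne
  exact hne (by simpa [eq_comm] using hf hne (z := x) (z' := x) (by rw [h]))

theorem PairDistInjective.dist_eq_dist_iff [MetricSpace Y] {f : X → Y}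
    (hf : PairDistInjective f) {x x' z z' : X} :
    dist (f x) (f x') = dist (f z) (f z') ↔ x = x' ∧ z = z' ∨ s(x, x') = s(z, z') := by
  constructor
  · intro h
    by_cases hx : x = x'
    · subst hx
      rw [dist_self, eq_comm, dist_eq_zero] at h
      exact Or.inl ⟨rfl, hf.injective h⟩
    · exact Or.inr (hf hx h)
  · rintro (⟨rfl, rfl⟩ | h)
    · simp
    · rcases Sym2.eq_iff.1 h with ⟨rfl, rfl⟩ | ⟨rfl, rfl⟩
      exacts [rfl, dist_comm _ _]

theorem PairDistInjective.isLooseEmbedding [MetricSpace X] [MetricSpace Y] {f : X → Y}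
    (hf : PairDistInjective f) (hX : DistinctDists X) (hc : Continuous f) :
    IsLooseEmbedding f :=
  ⟨hf.injective, hc, fun _ _ _ _ => hf.dist_eq_dist_iff.trans hX.dist_eq_dist_iff.symm⟩

theorem Isometry.distinctDists [MetricSpace X] [PseudoMetricSpace Y] {f : X → Y}
    (hf : Isometry f) (hY : DistinctDists Y) : DistinctDists X := by
  intro x x' z z' hx h
  have := hY (x := f x) (x' := f x') (z := f z) (z' := f z') (hf.injective.ne hx)
    (by simpa only [id, hf.dist_eq] using h)
  rw [← Sym2.map_mk, ← Sym2.map_mk] at this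
  exact Sym2.map.injective hf.injective this

theorem FarPairs.map_ne [PseudoMetricSpace X] {f : X → Y} {ε : ℝ}
    (hf : ∀ a b, ε ≤ dist a b → f a ≠ f b) {x x' z z' : X} (h : FarPairs ε x x' z z') :
    f x ≠ f x' ∧ s(f x, f x') ≠ s(f z, f z') := by
  obtain ⟨h₁, h₂, h₃⟩ := h
  refine ⟨hf _ _ h₁, fun he => ?_⟩
  rcases Sym2.eq_iff.1 he with ⟨ha, hb⟩ | ⟨ha, hb⟩
  · rcases le_max_iff.1 h₂ with h | h
    exacts [hf _ _ h ha, hf _ _ h hb]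
  · rcases le_max_iff.1 h₃ with h | h
    exacts [hf _ _ h ha, hf _ _ h hb]

theorem exists_nat_farPairs [MetricSpace X] {x x' z z' : X} (hx : x ≠ x')
    (hs : s(x, x') ≠ s(z, z')) : ∃ n : ℕ, FarPairs (1 / (n + 1)) x x' z z' := by
  have h₂ : 0 < max (dist x z) (dist x' z') := by
    contrapose! hs
    rw [dist_le_zero.1 ((le_max_left _ _).trans hs), dist_le_zero.1 ((le_max_right _ _).trans hs)]
  have h₃ : 0 < max (dist x z') (dist x' z) := by
    contrapose! hs
    rw [dist_le_zero.1 ((le_max_left _ _).trans hs), dist_le_zero.1 ((le_max_right _ _).trans hs),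
      Sym2.eq_swap]
  obtain ⟨n, hn⟩ := exists_nat_one_div_lt (lt_min (dist_pos.2 hx) (lt_min h₂ h₃))
  simp only [lt_min_iff] at hn
  exact ⟨n, hn.1.le, hn.2.1.le, hn.2.2.le⟩

theorem pairDistInjective_of_forall_farPairs [MetricSpace X] [PseudoMetricSpace Y] {f : X → Y}
    (h : ∀ n : ℕ, ∀ x x' z z', FarPairs (1 / (n + 1)) x x' z z' →
      dist (f x) (f x') ≠ dist (f z) (f z')) :
    PairDistInjective f := by
  intro x x' z z' hx heq
  by_contra hs
  obtain ⟨n, hn⟩ := exists_nat_farPairs hx hs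
  exact h n _ _ _ _ hn heq

end DistinctDistances

section GenericPerturbation

variable {ι : Type*}

theorem Nat.sym2_eq_of_three_pow_add_three_pow_eq {a b c d : ℕ}
    (h : 3 ^ a + 3 ^ b = 3 ^ c + 3 ^ d) : s(a, b) = s(c, d) := by
  wlog hab : a ≤ b generalizing a b
  · rw [Sym2.eq_swap]; exact this (by rwa [add_comm]) (by omega)
  wlog hcd : c ≤ d generalizing c d
  · rw [Sym2.eq_swap (a := c)]; exact this (by rwa [add_comm (3 ^ d)]) (by omega)
  -- `3 ^ n ≤ 3 ^ m + 3 ^ n < 3 ^ (n + 1)`, so the larger exponent is read off by `Nat.log 3`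
  have hlog : ∀ {m n : ℕ}, m ≤ n → Nat.log 3 (3 ^ m + 3 ^ n) = n := fun {m n} hmn => by
    have : 3 ^ m ≤ 3 ^ n := Nat.pow_le_pow_right (by norm_num) hmn
    have : 0 < 3 ^ m := by positivity
    rw [Nat.log_eq_iff (by norm_num), pow_succ]
    omega
  obtain rfl : b = d := by rw [← hlog hab, ← hlog hcd, h]
  obtain rfl : a = c := Nat.pow_right_injective (a := 3) (by norm_num) (Nat.add_right_cancel h)
  rfl

theorem three_pow_sub_three_pow_ne {κ : ι → ℕ} (hκ : Injective κ) {i j k l : ι} (hij : i ≠ j)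
    (hs : s(i, j) ≠ s(k, l)) : (3 : ℝ) ^ κ i - 3 ^ κ j ≠ 3 ^ κ k - 3 ^ κ l := by
  intro h
  have : 3 ^ κ i + 3 ^ κ l = 3 ^ κ k + 3 ^ κ j := by
    exact_mod_cast (by linarith : (3 : ℝ) ^ κ i + 3 ^ κ l = 3 ^ κ k + 3 ^ κ j)
  rcases Sym2.eq_iff.1 (Nat.sym2_eq_of_three_pow_add_three_pow_eq this) with ⟨hik, hlj⟩ | ⟨hij', -⟩
  · exact hs (by rw [hκ hik, hκ hlj])
  · exact hij (hκ hij')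

theorem eventually_add_mul_ne_add_mul (u u' : ℝ) {v v' : ℝ} (h : v ≠ v') :
    ∀ᶠ s in 𝓝[>] (0 : ℝ), u + s * v ≠ u' + s * v' := by
  filter_upwards [((nhdsGT_le_nhdsNE 0).trans (nhdsNE_le_cofinite 0))
    (eventually_cofinite_ne ((u' - u) / (v - v')))] with s hs heq
  refine hs ?_
  rw [eq_div_iff (sub_ne_zero.2 h)]
  linarith

theorem eventually_forall_mul_lt [Finite ι] (c : ι → ℝ) {ε : ℝ} (hε : 0 < ε) :
    ∀ᶠ s in 𝓝[>] (0 : ℝ), ∀ i, |s * c i| < ε := by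
  refine eventually_all.2 fun i => ?_
  have : Tendsto (fun s : ℝ => s * c i) (𝓝[>] 0) (𝓝 0) :=
    ((continuous_mul_const (c i)).tendsto' 0 0 (zero_mul _)).mono_left nhdsWithin_le_nhds
  simpa using this.eventually (Metric.ball_mem_nhds 0 hε)

theorem exists_pairDistInjective_forall_dist_lt [Finite ι] (t : ι → ℝ) {ε : ℝ} (hε : 0 < ε) :
    ∃ a : ι → ℝ, (∀ i, dist (a i) (t i) < ε) ∧ PairDistInjective a := by
  obtain ⟨κ, hκ⟩ := exists_injective_nat ι
  set c : ι → ℝ := fun i => 3 ^ κ i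
  have hgen : ∀ᶠ s in 𝓝[>] (0 : ℝ), ∀ i j k l, i ≠ j → s(i, j) ≠ s(k, l) →
      (t i - t j) + s * (c i - c j) ≠ (t k - t l) + s * (c k - c l) := by
    simp only [eventually_all]
    exact fun i j k l hij hs =>
      eventually_add_mul_ne_add_mul _ _ (three_pow_sub_three_pow_ne hκ hij hs)
  obtain ⟨s, hgen, hsmall⟩ := (hgen.and (eventually_forall_mul_lt c hε)).exists
  refine ⟨fun i => t i + s * c i, fun i => by simpa [Real.dist_eq] using hsmall i, ?_⟩
  intro i j k l hij h
  by_contra hs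
  rw [Real.dist_eq, Real.dist_eq, abs_eq_abs] at h
  rcases h with h | h
  · exact hgen i j k l hij hs (by linarith)
  · exact hgen i j l k hij (by rwa [Sym2.eq_swap (a := l)]) (by linarith)

theorem exists_injective_add_mem_Ico [Finite ι] (u : ι → ℝ) {δ : ℝ} (hδ : 0 < δ) :
    ∃ w : ι → ℝ, (∀ i, w i ∈ Ico 0 δ) ∧ Injective (u + w) := by
  obtain ⟨κ, hκ⟩ := exists_injective_nat ι
  have hgen : ∀ᶠ s in 𝓝[>] (0 : ℝ), ∀ i j, i ≠ j → u i + s * κ i ≠ u j + s * κ j := by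
    simp only [eventually_all]
    exact fun i j hij => eventually_add_mul_ne_add_mul _ _ (by exact_mod_cast hκ.ne hij)
  obtain ⟨s, hs, hgen, hsmall⟩ := (eventually_mem_nhdsWithin.and
    (hgen.and (eventually_forall_mul_lt (fun i => (κ i : ℝ)) hδ))).exists
  refine ⟨fun i => s * κ i, fun i => ⟨mul_nonneg (le_of_lt hs) (Nat.cast_nonneg _),
    (le_abs_self _).trans_lt (hsmall i)⟩, ?_⟩
  intro i j h
  by_contra hij
  exact hgen i j hij h

end GenericPerturbation

section LooseEmbedding

variable {X : Type*} [MetricSpace X] [CompactSpace X]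

theorem isOpen_setOf_forall_farPairs_dist_ne (ε : ℝ) :
    IsOpen {g : C(X, ℝ) | ∀ x x' z z', FarPairs ε x x' z z' →
      dist (g x) (g x') ≠ dist (g z) (g z')} := by
  have hK : IsCompact {w : X × X × X × X | FarPairs ε w.1 w.2.1 w.2.2.1 w.2.2.2} := by
    refine IsClosed.isCompact ?_
    simp only [FarPairs, ofPred_and]
    refine (isClosed_le continuous_const ?_).inter
      ((isClosed_le continuous_const ?_).inter (isClosed_le continuous_const ?_)) <;> fun_prop
  refine isOpen_iff_mem_nhds.2 fun g hg => ?_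
  have := hK.eventually_forall_of_forall_eventually (x₀ := g)
    (P := fun g w => dist (g w.1) (g w.2.1) ≠ dist (g w.2.2.1) (g w.2.2.2)) fun w hw => by
      have hc : Continuous fun p : C(X, ℝ) × (X × X × X × X) =>
          dist (p.1 p.2.1) (p.1 p.2.2.1) - dist (p.1 p.2.2.2.1) (p.1 p.2.2.2.2) := by fun_prop
      exact (hc.tendsto (g, w)).eventually_ne (sub_ne_zero.2 (hg _ _ _ _ hw)) |>.mono
        fun p hp => sub_ne_zero.1 hp
  filter_upwards [this] with g' hg' x x' z z' h using hg' (x, x', z, z') h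

theorem dense_setOf_forall_farPairs_dist_ne [TotallyDisconnectedSpace X] {ε : ℝ} (hε : 0 < ε) :
    Dense {g : C(X, ℝ) | ∀ x x' z z', FarPairs ε x x' z z' →
      dist (g x) (g x') ≠ dist (g z) (g z')} := by
  refine Metric.dense_iff.2 fun g₀ r hr => ?_
  set ρ := min (ε / 2) (r / 2)
  have hρ : 0 < ρ := by positivity
  have hS : {p : (X × ℝ) × (X × ℝ) | dist p.1 p.2 < ρ} ∈ 𝓝ˢ (diagonal (X × ℝ)) :=
    (isOpen_lt continuous_dist continuous_const).mem_nhdsSet.2 fun p (hp : p.1 = p.2) => by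
      simpa [hp] using hρ
  -- approximating the graph map makes the pieces `κ ⁻¹' {i}` small and `g₀` almost constant on them
  obtain ⟨n, κ, h, hκ, hκh⟩ := (ContinuousMap.mk (fun x => (x, g₀ x))
    (by fun_prop)).exists_finite_approximation_of_mem_nhds_diagonal hS
  have hκh : ∀ x, dist x (h (κ x)).1 < ρ ∧ dist (g₀ x) (h (κ x)).2 < ρ := fun x =>
    max_lt_iff.1 (hκh x)
  obtain ⟨a, hat, ha⟩ := exists_pairDistInjective_forall_dist_lt (fun i => (h i).2) (half_pos hr)
  let g : C(X, ℝ) := ⟨a ∘ κ, continuous_of_discreteTopology.comp hκ⟩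
  have hsep : ∀ x y, ε ≤ dist x y → κ x ≠ κ y := fun x y hxy he => by
    have hx := (hκh x).1
    rw [he] at hx
    linarith [dist_triangle_right x y (h (κ y)).1, (hκh y).1, min_le_left (ε / 2) (r / 2)]
  refine ⟨g, ?_, fun x x' z z' hf => ?_⟩
  · rw [mem_ball, ContinuousMap.dist_lt_iff hr]
    intro x
    calc dist (a (κ x)) (g₀ x) ≤ dist (a (κ x)) (h (κ x)).2 + dist (g₀ x) (h (κ x)).2 :=
          dist_triangle_right _ _ _
      _ < r / 2 + r / 2 := add_lt_add (hat _) ((hκh x).2.trans_le (min_le_right _ _))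
      _ = r := add_halves r
  · obtain ⟨hne, hs⟩ := hf.map_ne hsep
    exact fun he => hs (ha hne he)

theorem DistinctDists.exists_isLooseEmbedding [TotallyDisconnectedSpace X] (hX : DistinctDists X) :
    ∃ f : X → ℝ, IsLooseEmbedding f := by
  have : ∀ᶠ g in residual C(X, ℝ), ∀ n : ℕ, ∀ x x' z z', FarPairs (1 / (n + 1)) x x' z z' →
      dist (g x) (g x') ≠ dist (g z) (g z') :=
    eventually_countable_forall.2 fun n => residual_of_dense_open
      (isOpen_setOf_forall_farPairs_dist_ne _) (dense_setOf_forall_farPairs_dist_ne (by positivity))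
  obtain ⟨g, hg⟩ := (dense_of_mem_residual this).nonempty
  exact ⟨g, (pairDistInjective_of_forall_farPairs hg).isLooseEmbedding hX g.continuous⟩

end LooseEmbedding

section Perturbation

variable {α : Type*} [MetricSpace α]

open Classical in
noncomputable def perturbedDist (δ : ℝ) (w : Sym2 α → ℝ) (x y : α) : ℝ :=
  if x = y then 0 else dist x y + δ + w s(x, y)

variable {δ : ℝ} {w : Sym2 α → ℝ}

theorem perturbedDist_of_ne {x y : α} (h : x ≠ y) :
    perturbedDist δ w x y = dist x y + δ + w s(x, y) := if_neg h

theorem perturbedDist_comm (x y : α) : perturbedDist δ w x y = perturbedDist δ w y x := by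
  by_cases h : x = y
  · rw [h]
  · rw [perturbedDist_of_ne h, perturbedDist_of_ne (Ne.symm h), dist_comm, Sym2.eq_swap]

theorem lt_perturbedDist (hδ : 0 < δ) (hw : ∀ e, w e ∈ Icc 0 δ) {x y : α} (h : x ≠ y) :
    dist x y < perturbedDist δ w x y := by
  rw [perturbedDist_of_ne h]
  linarith [(hw s(x, y)).1]

theorem perturbedDist_nonneg (hδ : 0 < δ) (hw : ∀ e, w e ∈ Icc 0 δ) (x y : α) :
    0 ≤ perturbedDist δ w x y := by
  by_cases h : x = y
  · simp [perturbedDist, h]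
  · exact dist_nonneg.trans (lt_perturbedDist hδ hw h).le

/-- The extra `≤ 2δ` on one side of the triangle inequality is paid for by the two extras `≥ δ`
on the other. -/
theorem perturbedDist_triangle (hδ : 0 < δ) (hw : ∀ e, w e ∈ Icc 0 δ) (x y z : α) :
    perturbedDist δ w x z ≤ perturbedDist δ w x y + perturbedDist δ w y z := by
  have h₀ := perturbedDist_nonneg hδ hw (w := w)
  by_cases hxz : x = z
  · simp only [perturbedDist, if_pos hxz]
    exact add_nonneg (h₀ _ _) (h₀ _ _)
  by_cases hxy : x = y
  · subst hxy; simp [perturbedDist]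
  by_cases hyz : y = z
  · subst hyz; simp [perturbedDist]
  simp only [perturbedDist_of_ne, hxz, hxy, hyz, ne_eq, not_false_eq_true]
  linarith [dist_triangle x y z, (hw s(x, z)).2, (hw s(x, y)).1, (hw s(y, z)).1]

theorem sym2_eq_of_perturbedDist_eq (hδ : 0 < δ) (hw : ∀ e, w e ∈ Icc 0 δ)
    (hinj : Injective (Sym2.lift ⟨dist, dist_comm⟩ + w)) {x x' z z' : α} (hx : x ≠ x')
    (h : perturbedDist δ w x x' = perturbedDist δ w z z') : s(x, x') = s(z, z') := by
  have hz : z ≠ z' := by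
    rintro rfl
    simp only [perturbedDist, if_true] at h
    exact (dist_nonneg.trans_lt (lt_perturbedDist hδ hw hx)).ne' h
  rw [perturbedDist_of_ne hx, perturbedDist_of_ne hz] at h
  exact hinj (by simp only [Pi.add_apply, Sym2.lift_mk]; linarith)

def Perturbed (α : Type*) : Type _ := α

@[reducible] noncomputable def perturbedMetric (hδ : 0 < δ) (hw : ∀ e, w e ∈ Icc 0 δ) :
    MetricSpace (Perturbed α) where
  dist := perturbedDist (α := α) δ w
  dist_self x := if_pos rfl
  dist_comm := perturbedDist_comm (α := α)
  dist_triangle := perturbedDist_triangle (α := α) hδ hw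
  eq_of_dist_eq_zero {x y} h := by
    by_contra hxy
    exact (dist_nonneg.trans_lt (lt_perturbedDist (α := α) hδ hw hxy)).ne' h

end Perturbation

def DistGap (γ : ℝ) (X : Type*) [PseudoMetricSpace X] : Prop :=
  ∀ ⦃x x' z z' : X⦄, x ≠ x' → s(x, x') ≠ s(z, z') → γ ≤ |dist x x' - dist z z'|

theorem DistinctDists.exists_distGap {X : Type*} [MetricSpace X] [Finite X]
    (h : DistinctDists X) : ∃ γ > 0, DistGap γ X := by
  have : ∀ᶠ γ in 𝓝[>] (0 : ℝ), DistGap γ X := by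
    simp only [DistGap, eventually_all]
    intro x x' z z' hx hs
    have : 0 < |dist x x' - dist z z'| := abs_pos.2 (sub_ne_zero.2 fun he => hs (h hx he))
    exact ((eventually_lt_nhds this).filter_mono nhdsWithin_le_nhds).mono fun _ => le_of_lt
  exact (eventually_mem_nhdsWithin.and this).exists

namespace GromovHausdorff

theorem nonempty_rep_toGHSpace_isometryEquiv (X : Type*) [MetricSpace X] [CompactSpace X]
    [Nonempty X] : Nonempty ((toGHSpace X).Rep ≃ᵢ X) :=
  toGHSpace_eq_toGHSpace_iff_isometryEquiv.1 (toGHSpace X).toGHSpace_rep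

theorem exists_abs_dist_sub_dist_lt {p q : GHSpace} {δ : ℝ} (h : dist p q < δ) :
    ∃ i : p.Rep → q.Rep, ∀ x x', |dist x x' - dist (i x) (i x')| < 2 * δ := by
  obtain ⟨Φ, Ψ, hΦ, hΨ, hH⟩ := ghDist_eq_hausdorffDist p.Rep q.Rep
  rw [← dist_ghDist] at hH
  have hfin : hausdorffEDist (range Φ) (range Ψ) ≠ ⊤ :=
    hausdorffEDist_ne_top_of_nonempty_of_bounded (range_nonempty _) (range_nonempty _)
      (isCompact_range hΦ.continuous).isBounded (isCompact_range hΨ.continuous).isBounded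
  have : ∀ x, ∃ y, dist (Φ x) (Ψ y) < δ := fun x => by
    obtain ⟨_, ⟨y, rfl⟩, hy⟩ := exists_dist_lt_of_hausdorffDist_lt (mem_range_self x) (hH ▸ h) hfin
    exact ⟨y, hy⟩
  choose i hi using this
  refine ⟨i, fun x x' => ?_⟩
  rw [← hΦ.dist_eq, ← hΨ.dist_eq, ← Real.dist_eq]
  linarith [dist_dist_dist_le (Φ x) (Φ x') (Ψ (i x)) (Ψ (i x')), hi x, hi x']

theorem exists_finite_distinctDists_dist_le (X : Type*) [MetricSpace X] [Finite X] [Nonempty X]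
    {δ : ℝ} (hδ : 0 < δ) :
    ∃ q : GHSpace, dist (toGHSpace X) q ≤ δ ∧ Finite q.Rep ∧ DistinctDists q.Rep := by
  obtain ⟨w, hw, hinj⟩ :=
    exists_injective_add_mem_Ico (Sym2.lift ⟨dist, dist_comm⟩ : Sym2 X → ℝ) hδ
  have hw' : ∀ e, w e ∈ Icc 0 δ := fun e => Ico_subset_Icc_self (hw e)
  let _ := perturbedMetric hδ hw'
  have : Finite (Perturbed X) := inferInstanceAs (Finite X)
  have : Nonempty (Perturbed X) := inferInstanceAs (Nonempty X)
  have hdd : DistinctDists (Perturbed X) := fun _ _ _ _ hx h =>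
    sym2_eq_of_perturbedDist_eq (α := X) hδ hw' hinj hx h
  obtain ⟨e⟩ := nonempty_rep_toGHSpace_isometryEquiv (Perturbed X)
  refine ⟨toGHSpace (Perturbed X), ?_, Finite.of_equiv _ e.symm.toEquiv,
    e.isometry.distinctDists hdd⟩
  have := ghDist_le_of_approx_subsets (X := X) (Y := Perturbed X) (s := univ)
    (Φ := fun x => (x : X)) (ε₁ := 0) (ε₂ := 2 * δ) (ε₃ := 0)
    (fun x => ⟨x, mem_univ x, by simp⟩) (fun y => ⟨⟨y, mem_univ _⟩, by simp⟩) fun x y => by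
      change |dist (x : X) y - perturbedDist δ w x y| ≤ 2 * δ
      by_cases h : (x : X) = y
      · simp [h, perturbedDist, hδ.le]
      · rw [perturbedDist_of_ne h, abs_le]
        constructor <;> linarith [(hw' s((x : X), y)).1, (hw' s((x : X), y)).2]
  exact this.trans_eq (by ring)

theorem exists_finite_distinctDists_dist_lt (p : GHSpace) {ε : ℝ} (hε : 0 < ε) :
    ∃ q : GHSpace, dist p q < ε ∧ Finite q.Rep ∧ DistinctDists q.Rep := by
  obtain ⟨t, -, htfin, htcover⟩ := finite_cover_balls_of_compact (X := p.Rep) isCompact_univ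
    (by positivity : 0 < ε / 3)
  have hnet : ∀ x : p.Rep, ∃ y ∈ t, dist x y ≤ ε / 3 := fun x => by
    obtain ⟨y, hy, hxy⟩ := mem_iUnion₂.1 (htcover (mem_univ x))
    exact ⟨y, hy, (mem_ball.1 hxy).le⟩
  have : Finite t := htfin.to_subtype
  have : Nonempty t := let ⟨y, hy, _⟩ := hnet (Classical.arbitrary _); ⟨⟨y, hy⟩⟩
  have hpt : dist p (toGHSpace t) ≤ ε / 3 := by
    have := ghDist_le_of_approx_subsets (X := p.Rep) (Y := t) (Φ := id) (ε₂ := 0) (ε₃ := 0) hnet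
      (fun y => ⟨y, by simp⟩) (fun x y => by simp [Subtype.dist_eq])
    have e : dist p (toGHSpace t) = ghDist p.Rep t := by rw [ghDist, p.toGHSpace_rep]
    exact e.trans_le (this.trans_eq (by ring))
  obtain ⟨q, htq, hfin, hdd⟩ := exists_finite_distinctDists_dist_le t (by positivity : 0 < ε / 3)
  exact ⟨q, by linarith [dist_triangle p (toGHSpace t) q], hfin, hdd⟩

def gapNeighborhood (ε : ℝ) : Set GHSpace :=
  ⋃ (q : GHSpace) (γ : ℝ) (_ : DistGap γ q.Rep), ball q (min γ ε / 4)

theorem isOpen_gapNeighborhood (ε : ℝ) : IsOpen (gapNeighborhood ε) :=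
  isOpen_iUnion fun _ => isOpen_iUnion fun _ => isOpen_iUnion fun _ => isOpen_ball

theorem dense_val_preimage_gapNeighborhood {ε : ℝ} (hε : 0 < ε) :
    Dense (Subtype.val ⁻¹' gapNeighborhood ε :
      Set {q : GHSpace // TotallyDisconnectedSpace q.Rep}) := by
  refine Metric.dense_iff.2 fun p r hr => ?_
  obtain ⟨q, hpq, hfin, hdd⟩ := exists_finite_distinctDists_dist_lt p.val hr
  obtain ⟨γ, hγ, hgap⟩ := hdd.exists_distGap
  refine ⟨⟨q, inferInstance⟩, ?_, mem_iUnion₂.2 ⟨q, γ, mem_iUnion.2 ⟨hgap, ?_⟩⟩⟩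
  · rwa [mem_ball, Subtype.dist_eq, dist_comm]
  · exact mem_ball_self (by positivity)

/-- Via an almost isometry onto a space with gap `γ`, equal distances of `ε`-far pairs would give
distances `< γ` apart of distinct pairs there. -/
theorem dist_ne_dist_of_mem_gapNeighborhood {ε : ℝ} {p : GHSpace} (hp : p ∈ gapNeighborhood ε)
    {x x' z z' : p.Rep} (h : FarPairs ε x x' z z') : dist x x' ≠ dist z z' := by
  simp only [gapNeighborhood, mem_iUnion, mem_ball] at hp
  obtain ⟨q, γ, hgap, hpq⟩ := hp
  have hpos : 0 < min γ ε := by linarith [dist_nonneg (x := p) (y := q)]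
  obtain ⟨i, hi⟩ := exists_abs_dist_sub_dist_lt hpq
  have hsep : ∀ a b, ε ≤ dist a b → i a ≠ i b := fun a b hab he => by
    have := hi a b
    rw [he, dist_self, sub_zero, abs_of_nonneg dist_nonneg] at this
    linarith [min_le_right γ ε]
  obtain ⟨hne, hs⟩ := h.map_ne hsep
  intro he
  refine (hgap hne hs).not_gt ?_
  calc |dist (i x) (i x') - dist (i z) (i z')|
      = |(dist z z' - dist (i z) (i z')) - (dist x x' - dist (i x) (i x'))| := by
        rw [he]; congr 1; ring
    _ ≤ |dist z z' - dist (i z) (i z')| + |dist x x' - dist (i x) (i x')| := abs_sub _ _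
    _ < 2 * (min γ ε / 4) + 2 * (min γ ε / 4) := add_lt_add (hi z z') (hi x x')
    _ ≤ γ := by linarith [min_le_left γ ε]

theorem distinctDists_of_forall_mem_gapNeighborhood {p : GHSpace}
    (hp : ∀ n : ℕ, p ∈ gapNeighborhood (1 / (n + 1))) : DistinctDists p.Rep :=
  pairDistInjective_of_forall_farPairs fun n _ _ _ _ h =>
    dist_ne_dist_of_mem_gapNeighborhood (hp n) h

end GromovHausdorff

/-- The set of isometry classes in `M₀` (the subspace of the Gromov–Hausdorff space consisting
of classes of totally disconnected compact metric spaces) of those spaces that admit a loose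
embedding into the real line is residual (comeager) in `M₀`. -/
theorem looselyEmbeddable_residual_in_M0 :
    {p : {q : GromovHausdorff.GHSpace // TotallyDisconnectedSpace q.Rep} |
        ∃ f : p.val.Rep → ℝ, IsLooseEmbedding f} ∈
      residual {q : GromovHausdorff.GHSpace // TotallyDisconnectedSpace q.Rep} := by
  have : ∀ᶠ p in residual {q : GHSpace // TotallyDisconnectedSpace q.Rep},
      ∀ n : ℕ, p.val ∈ gapNeighborhood (1 / (n + 1)) :=
    eventually_countable_forall.2 fun n => residual_of_dense_open
      ((isOpen_gapNeighborhood _).preimage continuous_subtype_val)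
      (dense_val_preimage_gapNeighborhood (by positivity))
  filter_upwards [this] with p hp
  have := p.property
  exact (distinctDists_of_forall_mem_gapNeighborhood hp).exists_isLooseEmbedding
end

section
/- Every compact totally disconnected metric space whose distance function is injective admits a loose embedding into the real line ℝ. -/
/-- The distance function of a metric space is injective: it is one-to-one on unordered pairs of
distinct points. -/
def InjectiveDist (X : Type*) [MetricSpace X] : Prop :=
  ∀ x y x' y' : X, x ≠ y → x' ≠ y' → dist x y = dist x' y' → ({x, y} : Set X) = {x', y'}

open Set Function Cardinal

namespace InjectiveDist

variable {X : Type*} [MetricSpace X]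

theorem dist_eq_dist_iff (hX : InjectiveDist X) {x x' z z' : X} :
    dist x x' = dist z z' ↔ (x = x' ∧ z = z') ∨ ({x, x'} : Set X) = {z, z'} := by
  constructor
  · intro h
    by_cases hxx' : x = x'
    · subst hxx'
      exact Or.inl ⟨rfl, dist_eq_zero.mp (by rw [← h, dist_self])⟩
    · have hzz' : z ≠ z' := by
        rintro rfl
        exact hxx' (dist_eq_zero.mp (by rw [h, dist_self]))
      exact Or.inr (hX x x' z z' hxx' hzz' h)
  · rintro (⟨rfl, rfl⟩ | h)
    · simp only [dist_self]
    · rcases pair_eq_pair_iff.mp h with ⟨rfl, rfl⟩ | ⟨rfl, rfl⟩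
      · rfl
      · exact dist_comm _ _

theorem injective_dist (hX : InjectiveDist X) (x₀ : X) : Injective (dist x₀) := by
  intro y y' h
  rcases hX.dist_eq_dist_iff.mp h with ⟨rfl, rfl⟩ | h
  · rfl
  · rcases pair_eq_pair_iff.mp h with ⟨-, rfl⟩ | ⟨rfl, rfl⟩ <;> rfl

end InjectiveDist

theorem isLooseEmbedding_of_injectiveDist {X Y : Type*} [MetricSpace X] [MetricSpace Y]
    (hX : InjectiveDist X) {f : X → Y} (hf : Injective f) (hfc : Continuous f)
    (hY : InjectiveDist (range f)) : IsLooseEmbedding f := by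
  refine ⟨hf, hfc, fun x x' z z' => ?_⟩
  set g := rangeFactorization f
  have hg : Injective g := rangeFactorization_injective.mpr hf
  show dist (g x) (g x') = dist (g z) (g z') ↔ _
  rw [hY.dist_eq_dist_iff, hX.dist_eq_dist_iff, hg.eq_iff, hg.eq_iff, ← image_pair,
    ← image_pair, (image_injective.mpr hg).eq_iff]

theorem injectiveDist_of_sub_eq_sub {s : Set ℝ}
    (h : ∀ a ∈ s, ∀ b ∈ s, ∀ c ∈ s, ∀ d ∈ s, a < b → c < d → b - a = d - c → a = c ∧ b = d) :
    InjectiveDist s := by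
  have hord : ∀ a ∈ s, ∀ b ∈ s, ∀ c ∈ s, ∀ d ∈ s, a < b → c ≠ d → |b - a| = |d - c| →
      ({a, b} : Set ℝ) = {c, d} := by
    intro a ha b hb c hc d hd hab hcd hdist
    rw [abs_of_pos (sub_pos.mpr hab)] at hdist
    rcases hcd.lt_or_gt with hcd | hdc
    · rw [abs_of_pos (sub_pos.mpr hcd)] at hdist
      obtain ⟨rfl, rfl⟩ := h a ha b hb c hc d hd hab hcd hdist
      rfl
    · rw [abs_sub_comm, abs_of_pos (sub_pos.mpr hdc)] at hdist
      obtain ⟨rfl, rfl⟩ := h a ha b hb d hd c hc hab hdc hdist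
      exact pair_comm _ _
  rintro ⟨a, ha⟩ ⟨b, hb⟩ ⟨c, hc⟩ ⟨d, hd⟩ hab hcd hdist
  simp only [Subtype.dist_eq, Real.dist_eq, ne_eq, Subtype.mk.injEq] at hab hcd hdist
  rw [← (image_injective.mpr Subtype.val_injective).eq_iff, image_pair, image_pair]
  rcases Ne.lt_or_gt hab with hab | hba
  · exact hord a ha b hb c hc d hd hab hcd (by rwa [abs_sub_comm, abs_sub_comm d])
  · rw [pair_comm]
    exact hord b hb a ha c hc d hd hba hcd (by rwa [abs_sub_comm d])

theorem cantorFunction_or {c : ℝ} (h0 : 0 ≤ c) (h1 : c < 1) {f g : ℕ → Bool}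
    (hfg : ∀ n, ¬(f n ∧ g n)) :
    cantorFunction c (fun n => f n || g n) = cantorFunction c f + cantorFunction c g := by
  rw [cantorFunction, cantorFunction, cantorFunction,
    ← (summable_cantor_function f h0 h1).tsum_add (summable_cantor_function g h0 h1)]
  refine tsum_congr fun n => ?_
  have := hfg n
  cases hf : f n <;> cases hg : g n <;> simp_all [cantorFunctionAux]

theorem pow_le_cantorFunction {c : ℝ} (h0 : 0 ≤ c) (h1 : c < 1) {f : ℕ → Bool} {n : ℕ}
    (hn : f n = true) : c ^ n ≤ cantorFunction c f := by
  rw [← cantorFunctionAux_true hn]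
  exact (summable_cantor_function f h0 h1).le_tsum n fun m _ => cantorFunctionAux_nonneg h0

theorem isGreatest_lowerBounds_Ioo_inter {α : Type*} [LinearOrder α] {K D : Set α}
    (hD : ∀ a ∈ K, ∀ b ∈ K, a < b → (Ioo a b ∩ D).Nonempty) {a b : α} (ha : a ∈ K) (hb : b ∈ K)
    (hab : a < b) : IsGreatest (K ∩ lowerBounds (Ioo a b ∩ D)) a := by
  refine ⟨⟨ha, fun t ht => ht.1.1.le⟩, fun k ⟨hk, hkS⟩ => le_of_not_gt fun hak => ?_⟩
  have hkb : min k b ∈ K := by rcases min_choice k b with h | h <;> rw [h] <;> assumption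
  obtain ⟨t, ⟨hat, htk⟩, htD⟩ := hD a ha _ hkb (lt_min hak hab)
  have hkt : k ≤ t := hkS ⟨⟨hat, htk.trans_le (min_le_right k b)⟩, htD⟩
  exact (htk.trans_le (min_le_left k b)).not_ge hkt

theorem isLeast_upperBounds_Ioo_inter {α : Type*} [LinearOrder α] {K D : Set α}
    (hD : ∀ a ∈ K, ∀ b ∈ K, a < b → (Ioo a b ∩ D).Nonempty) {a b : α} (ha : a ∈ K) (hb : b ∈ K)
    (hab : a < b) : IsLeast (K ∩ upperBounds (Ioo a b ∩ D)) b := by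
  refine ⟨⟨hb, fun t ht => ht.1.2.le⟩, fun k ⟨hk, hkS⟩ => le_of_not_gt fun hkb => ?_⟩
  have hka : max k a ∈ K := by rcases max_choice k a with h | h <;> rw [h] <;> assumption
  obtain ⟨t, ⟨hkt, htb⟩, htD⟩ := hD _ hka b hb (max_lt hkb hab)
  have htk : t ≤ k := hkS ⟨⟨(le_max_right k a).trans_lt hkt, htb⟩, htD⟩
  exact ((le_max_left k a).trans_lt hkt).not_ge htk

theorem eq_and_eq_of_Ioo_inter_eq {α : Type*} [LinearOrder α] {K D : Set α}
    (hD : ∀ a ∈ K, ∀ b ∈ K, a < b → (Ioo a b ∩ D).Nonempty) {a b c d : α} (ha : a ∈ K)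
    (hb : b ∈ K) (hc : c ∈ K) (hd : d ∈ K) (hab : a < b) (hcd : c < d)
    (h : Ioo a b ∩ D = Ioo c d ∩ D) : a = c ∧ b = d := by
  constructor
  · exact (isGreatest_lowerBounds_Ioo_inter hD ha hb hab).unique
      (h ▸ isGreatest_lowerBounds_Ioo_inter hD hc hd hcd)
  · exact (isLeast_upperBounds_Ioo_inter hD ha hb hab).unique
      (h ▸ isLeast_upperBounds_Ioo_inter hD hc hd hcd)

theorem IsTotallyDisconnected.nonempty_Ioo_diff {K : Set ℝ} (hK : IsTotallyDisconnected K)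
    {a b : ℝ} (ha : a ∈ K) (hb : b ∈ K) (hab : a < b) : (Ioo a b \ K).Nonempty := by
  by_contra hgap
  have hIcc : Icc a b ⊆ K := by
    rw [← Ioo_union_both hab.le]
    rintro t (ht | rfl | rfl)
    · by_contra htK
      exact hgap ⟨t, ht, htK⟩
    · exact ha
    · exact hb
  exact hab.ne (hK _ hIcc isPreconnected_Icc (left_mem_Icc.mpr hab.le) (right_mem_Icc.mpr hab.le))

def IsGapSequence (q : ℕ → ℝ) (K : Set ℝ) : Prop :=
  K ⊆ (range q)ᶜ ∧ ∀ a ∈ K, ∀ b ∈ K, a < b → (Ioo a b ∩ range q).Nonempty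

theorem IsTotallyDisconnected.exists_isGapSequence {K : Set ℝ} (hK : IsTotallyDisconnected K) :
    ∃ q : ℕ → ℝ, IsGapSequence q K := by
  have : Nonempty (Kᶜ : Set ℝ) := by
    by_contra hK'
    rw [nonempty_subtype, not_exists] at hK'
    obtain ⟨t, -, ht⟩ := hK.nonempty_Ioo_diff (not_not.mp (hK' 0)) (not_not.mp (hK' 1)) one_pos
    exact hK' t ht
  obtain ⟨u, hu⟩ := TopologicalSpace.exists_dense_seq (Kᶜ : Set ℝ)
  refine ⟨(↑) ∘ u, ?_, fun a ha b hb hab => ?_⟩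
  · rintro x hx ⟨n, rfl⟩
    exact (u n).2 hx
  · obtain ⟨t, ht, htK⟩ := hK.nonempty_Ioo_diff ha hb hab
    obtain ⟨n, hn⟩ := hu.exists_mem_open (isOpen_Ioo.preimage continuous_subtype_val)
      ⟨⟨t, htK⟩, ht⟩
    exact ⟨u n, hn, n, rfl⟩

noncomputable def staircase (q : ℕ → ℝ) (x : ℝ) : ℝ :=
  cantorFunction 3⁻¹ fun n => decide (q n < x)

section staircase

variable (q : ℕ → ℝ)

theorem staircase_sub {a b : ℝ} (ha : a ∉ range q) (hab : a ≤ b) :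
    staircase q b - staircase q a = cantorFunction 3⁻¹ fun n => decide (q n ∈ Ioo a b) := by
  rw [sub_eq_iff_eq_add', staircase, staircase, ← cantorFunction_or (by norm_num) (by norm_num)]
  · congr 1
    funext n
    have hna : q n ≠ a := fun h => ha ⟨n, h⟩
    rw [← Bool.decide_or, decide_eq_decide, mem_Ioo]
    grind
  · intro n
    simp only [decide_eq_true_eq, mem_Ioo]
    exact fun ⟨h, h', _⟩ => h.not_gt h'

theorem staircase_continuousOn : ContinuousOn (staircase q) (range q)ᶜ := by
  refine continuousOn_tsum (u := fun n => (3⁻¹ : ℝ) ^ n) (fun n x hx => ?_)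
    (summable_geometric_of_lt_one (by norm_num) (by norm_num)) (fun n x _ => ?_)
  · have hqx : q n ≠ x := fun h => hx ⟨n, h⟩
    refine ContinuousAt.continuousWithinAt ?_
    rcases hqx.lt_or_gt with h | h
    · refine (continuousAt_const : ContinuousAt (fun _ => (3⁻¹ : ℝ) ^ n) x).congr ?_
      filter_upwards [Ioi_mem_nhds h] with y hy
      simp [cantorFunctionAux, mem_Ioi.mp hy]
    · refine (continuousAt_const : ContinuousAt (fun _ => (0 : ℝ)) x).congr ?_
      filter_upwards [Iio_mem_nhds h] with y hy
      simp [cantorFunctionAux, (mem_Iio.mp hy).not_gt]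
  · rw [Real.norm_eq_abs, abs_of_nonneg (cantorFunctionAux_nonneg (by norm_num))]
    by_cases h : q n < x <;> simp [cantorFunctionAux, h]

variable {q} {K : Set ℝ}

theorem staircase_strictMonoOn (hq : IsGapSequence q K) :
    StrictMonoOn (staircase q) K := by
  intro a ha b hb hab
  obtain ⟨_, hn, n, rfl⟩ := hq.2 a ha b hb hab
  have hjump : (3⁻¹ : ℝ) ^ n ≤ staircase q b - staircase q a :=
    staircase_sub q (hq.1 ha) hab.le ▸ pow_le_cantorFunction (by norm_num) (by norm_num)
      (decide_eq_true hn)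
  exact sub_pos.mp ((pow_pos (by norm_num) n).trans_le hjump)

theorem staircase_sub_eq_sub (hq : IsGapSequence q K)
    {a b c d : ℝ} (ha : a ∈ K) (hb : b ∈ K) (hc : c ∈ K) (hd : d ∈ K)
    (hab : a < b) (hcd : c < d) (h : staircase q b - staircase q a = staircase q d - staircase q c) :
    a = c ∧ b = d := by
  rw [staircase_sub q (hq.1 ha) hab.le, staircase_sub q (hq.1 hc) hcd.le] at h
  have hpre : q ⁻¹' Ioo a b = q ⁻¹' Ioo c d := by
    ext n
    exact decide_eq_decide.mp (congrFun (cantorFunction_injective (by norm_num) (by norm_num) h) n)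
  refine eq_and_eq_of_Ioo_inter_eq hq.2 ha hb hc hd hab hcd ?_
  rw [← image_preimage_eq_inter_range, ← image_preimage_eq_inter_range, hpre]

theorem injectiveDist_image_staircase (hq : IsGapSequence q K) :
    InjectiveDist (staircase q '' K) := by
  have hmono := staircase_strictMonoOn hq
  refine injectiveDist_of_sub_eq_sub ?_
  rintro _ ⟨a, ha, rfl⟩ _ ⟨b, hb, rfl⟩ _ ⟨c, hc, rfl⟩ _ ⟨d, hd, rfl⟩ hab hcd h
  obtain ⟨rfl, rfl⟩ := staircase_sub_eq_sub hq ha hb hc hd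
    ((hmono.lt_iff_lt ha hb).mp hab) ((hmono.lt_iff_lt hc hd).mp hcd) h
  exact ⟨rfl, rfl⟩

end staircase

/-- Every compact totally disconnected metric space with injective distance function admits
a loose embedding into the real line. -/
theorem looselyEmbeddable_of_injectiveDist (X : Type*) [MetricSpace X] [CompactSpace X]
    [TotallyDisconnectedSpace X] (hX : InjectiveDist X) :
    ∃ f : X → ℝ, IsLooseEmbedding f := by
  rcases isEmpty_or_nonempty X with _ | ⟨⟨x₀⟩⟩
  · exact ⟨isEmptyElim, isEmptyElim, continuous_of_const isEmptyElim, isEmptyElim⟩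
  have hinj := hX.injective_dist x₀
  have hcont : Continuous (dist x₀) := continuous_const.dist continuous_id
  have hK : IsTotallyDisconnected (range (dist x₀)) :=
    (hcont.isClosedEmbedding hinj).isEmbedding.isTotallyDisconnected_range.mpr ‹_›
  obtain ⟨q, hq⟩ := hK.exists_isGapSequence
  refine ⟨staircase q ∘ dist x₀, isLooseEmbedding_of_injectiveDist hX ?_ ?_ ?_⟩
  · exact fun x y h => hinj ((staircase_strictMonoOn hq).injOn ⟨x, rfl⟩ ⟨y, rfl⟩ h)
  · exact ((staircase_continuousOn q).mono hq.1).comp_continuous hcont mem_range_self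
  · rw [range_comp]
    exact injectiveDist_image_staircase hq
end

section
/- The subset M_0 of the Gromov–Hausdorff space, consisting of isometry classes of totally disconnected nonempty compact metric spaces, is a Gδ subset (a countable intersection of open sets) of the Gromov–Hausdorff space. -/
/-!
Call a partition of a metric space *separated* when its classes have diameter at most `d` and
distinct classes are at distance at least `δ > 0`. A compact metric space is totally disconnected
iff it has separated partitions with `d` arbitrarily small: the classes of such a partition are
clopen, and conversely a compact totally disconnected space has finite clopen partitions of
arbitrarily small mesh, whose classes are automatically a positive distance apart. Having a
separated partition with `d < ε` is an open condition in the Gromov–Hausdorff space, since a map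
of distortion less than `2η` pulls such a partition back to one with the bounds `d + 2η` and
`δ - 2η`.
-/

open Metric Set GromovHausdorff

variable {X Y : Type*}

section PseudoMetric

variable [PseudoMetricSpace X] [PseudoMetricSpace Y]

def Setoid.IsSeparatedPartition (r : Setoid X) (d δ : ℝ) : Prop :=
  ∀ x y, (r x y → dist x y ≤ d) ∧ (dist x y < δ → r x y)

def HasSeparatedPartition (X : Type*) [PseudoMetricSpace X] (ε : ℝ) : Prop :=
  ∃ (r : Setoid X) (d δ : ℝ), d < ε ∧ 0 < δ ∧ r.IsSeparatedPartition d δ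

theorem HasSeparatedPartition.mono {ε ε' : ℝ} (h : HasSeparatedPartition X ε) (hε : ε ≤ ε') :
    HasSeparatedPartition X ε' :=
  let ⟨r, d, δ, hd, hδ, hr⟩ := h
  ⟨r, d, δ, hd.trans_le hε, hδ, hr⟩

theorem Setoid.IsSeparatedPartition.comap {r : Setoid X} {d δ η : ℝ}
    (hr : r.IsSeparatedPartition d δ) {g : Y → X}
    (hg : ∀ y y', |dist (g y) (g y') - dist y y'| ≤ η) :
    (r.comap g).IsSeparatedPartition (d + η) (δ - η) := by
  intro y y'
  have hdist := abs_sub_le_iff.1 (hg y y')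
  refine ⟨fun hyy' => ?_, fun hyy' => (hr (g y) (g y')).2 (by linarith)⟩
  have := (hr (g y) (g y')).1 hyy'
  linarith

theorem IsLocallyConstant.exists_pos_eq_of_dist_lt [CompactSpace X] {ι : Type*} {f : X → ι}
    (hf : IsLocallyConstant f) : ∃ δ > 0, ∀ x y, dist x y < δ → f x = f y := by
  obtain ⟨δ, hδ, hball⟩ := lebesgue_number_lemma_of_metric isCompact_univ
    (c := fun i => f ⁻¹' {i}) hf.isOpen_fiber fun x _ => mem_iUnion.2 ⟨f x, rfl⟩
  refine ⟨δ, hδ, fun x y hxy => ?_⟩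
  obtain ⟨i, hi⟩ := hball x (mem_univ x)
  exact (hi (mem_ball_self hδ)).trans (hi (mem_ball'.2 hxy)).symm

theorem Isometry.abs_dist_sub_dist_lt {Z : Type*} [PseudoMetricSpace Z] {Φ : X → Z} {Ψ : Y → Z}
    (hΦ : Isometry Φ) (hΨ : Isometry Ψ) {g : Y → X} {η : ℝ}
    (hg : ∀ y, dist (Φ (g y)) (Ψ y) < η) (y y' : Y) :
    |dist (g y) (g y') - dist y y'| < 2 * η := by
  have h₁ := dist_triangle4 (Φ (g y)) (Ψ y) (Ψ y') (Φ (g y'))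
  have h₂ := dist_triangle4 (Ψ y) (Φ (g y)) (Φ (g y')) (Ψ y')
  rw [hΦ.dist_eq, hΨ.dist_eq, dist_comm (Ψ y')] at h₁
  rw [hΦ.dist_eq, hΨ.dist_eq, dist_comm (Ψ y)] at h₂
  exact abs_sub_lt_iff.2 ⟨by linarith [hg y, hg y'], by linarith [hg y, hg y']⟩

end PseudoMetric

section Metric

variable [MetricSpace X]

theorem hasSeparatedPartition_of_totallyDisconnectedSpace [CompactSpace X]
    [TotallyDisconnectedSpace X] {ε : ℝ} (hε : 0 < ε) : HasSeparatedPartition X ε := by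
  obtain ⟨n, g, c, hg, hc⟩ := (ContinuousMap.id X).exists_finite_approximation_of_mem_nhds_diagonal
    (nhdsSet_diagonal_le_uniformity (dist_mem_uniformity (div_pos hε three_pos)))
  obtain ⟨δ, hδ, hgδ⟩ := ((IsLocallyConstant.iff_continuous g).2 hg).exists_pos_eq_of_dist_lt
  refine ⟨Setoid.ker g, 2 * (ε / 3), δ, by linarith, hδ, fun x y => ⟨fun hxy => ?_, hgδ x y⟩⟩
  have hx : dist x (c (g x)) < ε / 3 := hc x
  have hy : dist y (c (g x)) < ε / 3 := (hxy : g x = g y) ▸ hc y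
  linarith [dist_triangle_right x y (c (g x))]

theorem totallyDisconnectedSpace_of_forall_hasSeparatedPartition
    (h : ∀ ε > 0, HasSeparatedPartition X ε) : TotallyDisconnectedSpace X := by
  refine ⟨fun t _ ht x hx y hy => by_contra fun hxy => ?_⟩
  obtain ⟨r, d, δ, hd, hδ, hr⟩ := h (dist x y) (dist_pos.2 hxy)
  have hmk : IsLocallyConstant (Quotient.mk r) :=
    (IsLocallyConstant.iff_eventually_eq _).2 fun z => by
      filter_upwards [ball_mem_nhds z hδ] with w hw using Quotient.sound ((hr w z).2 hw)
  have hrxy : r x y := Quotient.exact (hmk.apply_eq_of_isPreconnected ht hx hy)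
  linarith [(hr x y).1 hrxy]

theorem totallyDisconnectedSpace_iff_forall_hasSeparatedPartition [CompactSpace X] :
    TotallyDisconnectedSpace X ↔ ∀ ε > 0, HasSeparatedPartition X ε :=
  ⟨fun _ _ => hasSeparatedPartition_of_totallyDisconnectedSpace,
    totallyDisconnectedSpace_of_forall_hasSeparatedPartition⟩

end Metric

namespace GromovHausdorff

theorem exists_abs_dist_sub_dist_lt_of_ghDist_lt [MetricSpace X] [CompactSpace X] [Nonempty X]
    [MetricSpace Y] [CompactSpace Y] [Nonempty Y] {η : ℝ} (h : ghDist X Y < η) :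
    ∃ g : Y → X, ∀ y y', |dist (g y) (g y') - dist y y'| < 2 * η := by
  have hΦ := isometry_optimalGHInjl X Y
  have hΨ := isometry_optimalGHInjr X Y
  have hfin := hausdorffEDist_ne_top_of_nonempty_of_bounded (range_nonempty _) (range_nonempty _)
    (isCompact_range hΦ.continuous).isBounded (isCompact_range hΨ.continuous).isBounded
  have hclose : ∀ y, ∃ x, dist (optimalGHInjl X Y x) (optimalGHInjr X Y y) < η := fun y => by
    obtain ⟨_, ⟨x, rfl⟩, hx⟩ := exists_dist_lt_of_hausdorffDist_lt' (mem_range_self y)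
      (hausdorffDist_optimal.trans_lt h) hfin
    exact ⟨x, hx⟩
  choose g hg using hclose
  exact ⟨g, hΦ.abs_dist_sub_dist_lt hΨ hg⟩

theorem isOpen_setOf_hasSeparatedPartition (ε : ℝ) :
    IsOpen {p : GHSpace | HasSeparatedPartition p.Rep ε} := by
  refine Metric.isOpen_iff.2 fun p ⟨r, d, δ, hd, hδ, hr⟩ => ?_
  set η := min (ε - d) δ / 3
  have hη : 0 < η := div_pos (lt_min (sub_pos.2 hd) hδ) three_pos
  have hηd : η ≤ (ε - d) / 3 := div_le_div_of_nonneg_right (min_le_left _ _) zero_le_three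
  have hηδ : η ≤ δ / 3 := div_le_div_of_nonneg_right (min_le_right _ _) zero_le_three
  refine ⟨η, hη, fun q hq => ?_⟩
  obtain ⟨g, hg⟩ := exists_abs_dist_sub_dist_lt_of_ghDist_lt (X := p.Rep) (Y := q.Rep)
    (by rwa [← dist_ghDist, dist_comm])
  exact ⟨r.comap g, d + 2 * η, δ - 2 * η, by linarith, by linarith,
    hr.comap fun y y' => (hg y y').le⟩

end GromovHausdorff

/-- The subset `M₀` of the Gromov–Hausdorff space consisting of isometry classes of totally
disconnected nonempty compact metric spaces is a Gδ subset. -/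
theorem isGδ_totallyDisconnected_GHSpace :
    IsGδ {p : GromovHausdorff.GHSpace | TotallyDisconnectedSpace p.Rep} := by
  have h : {p : GHSpace | TotallyDisconnectedSpace p.Rep} =
      ⋂ n : ℕ, {p : GHSpace | HasSeparatedPartition p.Rep (1 / (n + 1))} := by
    ext p
    simp only [mem_ofPred_eq, mem_iInter, totallyDisconnectedSpace_iff_forall_hasSeparatedPartition]
    refine ⟨fun hp n => hp _ Nat.one_div_pos_of_nat, fun hp ε hε => ?_⟩
    obtain ⟨n, hn⟩ := exists_nat_one_div_lt hε
    exact (hp n).mono hn.le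
  rw [h]
  exact .iInter fun n => (isOpen_setOf_hasSeparatedPartition _).isGδ
end

section
/- Fix positive integers N and M. Let 𝓜_{N,M} be the set of isometry classes in M_0 of compact totally disconnected metric spaces (X, d) admitting a finite partition into nonempty clopen subsets U_1, …, U_k such that each U_i has diameter less than 1/N, and such that for any indices with {i, j} ≠ {i', j'} as two-element sets (i ≠ j and i' ≠ j'), every x ∈ U_i, y ∈ U_j, x' ∈ U_{i'}, y' ∈ U_{j'} satisfy |d(x, y) − d(x', y')| > 1/M. Then 𝓜_{N,M} is an open subset of M_0 in the subspace topology inherited from the Gromov–Hausdorff space. -/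
/-- `HasFinePartition X N M` means `X` admits a finite partition into nonempty clopen subsets,
each of diameter less than `1/N`, such that whenever `{i, j} ≠ {i', j'}` as two-element sets
(`i ≠ j`, `i' ≠ j'`), points `x ∈ Uᵢ`, `y ∈ Uⱼ`, `x' ∈ U_{i'}`, `y' ∈ U_{j'}` satisfy
`|dist x y - dist x' y'| > 1/M`. -/
def HasFinePartition (X : Type*) [MetricSpace X] (N M : ℕ) : Prop :=
  ∃ (k : ℕ) (U : Fin k → Set X),
    (∀ i, (U i).Nonempty) ∧ (∀ i, IsClopen (U i)) ∧
    (∀ i, Metric.diam (U i) < 1 / (N : ℝ)) ∧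
    (⋃ i, U i) = Set.univ ∧ Pairwise (Function.onFun Disjoint U) ∧
    ∀ i j i' j' : Fin k, i ≠ j → i' ≠ j' → ({i, j} : Set (Fin k)) ≠ ({i', j'} : Set (Fin k)) →
      ∀ x ∈ U i, ∀ y ∈ U j, ∀ x' ∈ U i', ∀ y' ∈ U j',
        1 / (M : ℝ) < |dist x y - dist x' y'|

/-!
Compactness turns the strict inequalities of a fine partition `U` of `X` into inequalities with
a margin `η > 0`. If `Y` is at Gromov–Hausdorff distance less than `η` from `X`, embed both
isometrically into a common space at Hausdorff distance less than `η`, and let the `i`-th piece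
of `Y` be the set of points within `η` of `Uᵢ`. These pieces are open, cover `Y`, and are
disjoint because distinct pieces of `X` are more than `2η` apart, so they are clopen; their
diameters exceed those of the `Uᵢ` by at most `2η`, and distances between them differ from the
corresponding distances in `X` by less than `2η`.
-/

open Filter Function GromovHausdorff Metric Set Topology

theorem IsCompact.eventually_forall_lt {α β γ : Type*} [TopologicalSpace α] [TopologicalSpace β]
    [TopologicalSpace γ] [LinearOrder γ] [OrderClosedTopology γ] {K : Set β} (hK : IsCompact K)
    {f : α → γ} {g : β → γ} (hf : Continuous f) (hg : Continuous g) {a : α}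
    (h : ∀ y ∈ K, f a < g y) : ∀ᶠ x in 𝓝 a, ∀ y ∈ K, f x < g y :=
  hK.eventually_forall_of_forall_eventually fun y hy =>
    (hf.comp continuous_fst).continuousAt.eventually_lt (hg.comp continuous_snd).continuousAt
      (h y hy)

theorem isClopen_of_iUnion_eq_univ {ι X : Type*} [TopologicalSpace X] {V : ι → Set X}
    (hV : ∀ i, IsOpen (V i)) (hdisj : Pairwise (Disjoint on V)) (hcover : ⋃ i, V i = univ)
    (i : ι) : IsClopen (V i) := by
  refine ⟨⟨?_⟩, hV i⟩
  have : (V i)ᶜ = ⋃ (j) (_ : j ≠ i), V j := by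
    ext y
    obtain ⟨j, hj⟩ := mem_iUnion.1 (hcover ▸ mem_univ y)
    simp only [mem_compl_iff, mem_iUnion]
    refine ⟨fun hy => ⟨j, fun h => hy (h ▸ hj), hj⟩, ?_⟩
    rintro ⟨j, hji, hj⟩ hy
    exact disjoint_left.1 (hdisj hji) hj hy
  rw [this]
  exact isOpen_biUnion fun j _ => hV j

theorem mem_preimage_thickening_image {X Y Z : Type*} [PseudoMetricSpace Z] {Φ : X → Z}
    {Ψ : Y → Z} {η : ℝ} {S : Set X} {y : Y} :
    y ∈ Ψ ⁻¹' thickening η (Φ '' S) ↔ ∃ x ∈ S, dist (Ψ y) (Φ x) < η := by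
  simp [mem_thickening_iff]

section Isometry

variable {X Y Z : Type*} [PseudoMetricSpace X] [PseudoMetricSpace Z]
  {Φ : X → Z} {Ψ : Y → Z} {η : ℝ} {S T : Set X} {y : Y}

theorem Isometry.abs_dist_sub_dist_le [PseudoMetricSpace Y] (hΦ : Isometry Φ) (hΨ : Isometry Ψ)
    (y z : Y) (a b : X) :
    |dist y z - dist a b| ≤ dist (Ψ y) (Φ a) + dist (Ψ z) (Φ b) := by
  simpa only [Real.dist_eq, hΨ.dist_eq, hΦ.dist_eq] using dist_dist_dist_le (Ψ y) (Ψ z) (Φ a) (Φ b)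

theorem Isometry.diam_preimage_thickening_image_le [PseudoMetricSpace Y] (hΦ : Isometry Φ)
    (hΨ : Isometry Ψ) (hS : Bornology.IsBounded S) (hη : 0 ≤ η) :
    diam (Ψ ⁻¹' thickening η (Φ '' S)) ≤ diam S + 2 * η :=
  calc diam (Ψ ⁻¹' thickening η (Φ '' S))
      = diam (Ψ '' (Ψ ⁻¹' thickening η (Φ '' S))) := (hΨ.diam_image _).symm
    _ ≤ diam (thickening η (Φ '' S)) :=
      diam_mono (image_preimage_subset _ _) (hΦ.lipschitz.isBounded_image hS).thickening
    _ ≤ diam S + 2 * η := hΦ.diam_image S ▸ diam_thickening_le _ hη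

theorem Isometry.disjoint_preimage_thickening_image (hΦ : Isometry Φ)
    (h : ∀ x ∈ S, ∀ x' ∈ T, 2 * η ≤ dist x x') :
    Disjoint (Ψ ⁻¹' thickening η (Φ '' S)) (Ψ ⁻¹' thickening η (Φ '' T)) := by
  refine disjoint_left.2 fun y hS hT => ?_
  obtain ⟨x, hx, hxy⟩ := mem_preimage_thickening_image.1 hS
  obtain ⟨x', hx', hxy'⟩ := mem_preimage_thickening_image.1 hT
  have := h x hx x' hx'
  have := hΦ.dist_eq x x' ▸ dist_triangle_left (Φ x) (Φ x') (Ψ y)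
  linarith

end Isometry

def HasRobustFinePartition (X : Type*) [MetricSpace X] (N M : ℕ) (η : ℝ) : Prop :=
  ∃ (k : ℕ) (U : Fin k → Set X),
    (∀ i, (U i).Nonempty) ∧ (∀ i, diam (U i) + 2 * η < 1 / (N : ℝ)) ∧ (⋃ i, U i) = univ ∧
    (∀ i j, i ≠ j → ∀ x ∈ U i, ∀ y ∈ U j, 2 * η < dist x y) ∧
    ∀ i j i' j' : Fin k, i ≠ j → i' ≠ j' → ({i, j} : Set (Fin k)) ≠ ({i', j'} : Set (Fin k)) →
      ∀ x ∈ U i, ∀ y ∈ U j, ∀ x' ∈ U i', ∀ y' ∈ U j',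
        1 / (M : ℝ) + 4 * η < |dist x y - dist x' y'|

variable {X Y : Type*} [MetricSpace X] [MetricSpace Y] {N M : ℕ} {η : ℝ}

theorem HasFinePartition.exists_hasRobustFinePartition [CompactSpace X]
    (h : HasFinePartition X N M) : ∃ η > 0, HasRobustFinePartition X N M η := by
  obtain ⟨k, U, hne, hclopen, hdiam, hcover, hdisj, hgap⟩ := h
  have hU i : IsCompact (U i) := (hclopen i).isClosed.isCompact
  have diam_margin : ∀ᶠ η in 𝓝 (0 : ℝ), ∀ i, diam (U i) + 2 * η < 1 / (N : ℝ) :=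
    eventually_all.2 fun i =>
      ContinuousAt.eventually_lt (by fun_prop) (by fun_prop) (by simpa using hdiam i)
  have sep_margin : ∀ᶠ η in 𝓝 (0 : ℝ), ∀ i j, i ≠ j → ∀ x ∈ U i, ∀ y ∈ U j, 2 * η < dist x y := by
    refine eventually_all.2 fun i => eventually_all.2 fun j =>
      eventually_imp_distrib_left.2 fun hij => ?_
    have := ((hU i).prod (hU j)).eventually_forall_lt (a := 0) (f := fun η : ℝ => 2 * η)
      (g := fun p : X × X => dist p.1 p.2) (by fun_prop) (by fun_prop) <| by
        simp only [forall_prod_set, mul_zero, dist_pos]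
        exact fun x hx y hy hxy => disjoint_left.1 (hdisj hij) hx (hxy ▸ hy)
    simpa only [forall_prod_set] using this
  have gap_margin : ∀ᶠ η in 𝓝 (0 : ℝ), ∀ i j i' j' : Fin k, i ≠ j → i' ≠ j' →
      ({i, j} : Set (Fin k)) ≠ ({i', j'} : Set (Fin k)) →
      ∀ x ∈ U i, ∀ y ∈ U j, ∀ x' ∈ U i', ∀ y' ∈ U j',
        1 / (M : ℝ) + 4 * η < |dist x y - dist x' y'| := by
    refine eventually_all.2 fun i => eventually_all.2 fun j => eventually_all.2 fun i' =>
      eventually_all.2 fun j' => eventually_imp_distrib_left.2 fun hij =>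
      eventually_imp_distrib_left.2 fun hij' => eventually_imp_distrib_left.2 fun hne' => ?_
    have := ((hU i).prod ((hU j).prod ((hU i').prod (hU j')))).eventually_forall_lt (a := 0)
      (f := fun η : ℝ => 1 / (M : ℝ) + 4 * η)
      (g := fun p : X × X × X × X => |dist p.1 p.2.1 - dist p.2.2.1 p.2.2.2|)
      (by fun_prop) (by fun_prop) <| by
        simpa only [forall_prod_set, mul_zero, add_zero] using hgap i j i' j' hij hij' hne'
    simpa only [forall_prod_set] using this
  obtain ⟨η, ⟨⟨hdiam, hsep⟩, hgap⟩, hη⟩ :=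
    (((diam_margin.and sep_margin).and gap_margin).filter_mono nhdsWithin_le_nhds).and
      (self_mem_nhdsWithin : ∀ᶠ η in 𝓝[>] (0 : ℝ), 0 < η) |>.exists
  exact ⟨η, hη, k, U, hne, hdiam, hcover, hsep, hgap⟩

theorem HasRobustFinePartition.hasFinePartition_of_isometry [BoundedSpace X] {Z : Type*}
    [PseudoMetricSpace Z] {Φ : X → Z} {Ψ : Y → Z} (h : HasRobustFinePartition X N M η)
    (hΦ : Isometry Φ) (hΨ : Isometry Ψ) (hX : ∀ x, ∃ y, dist (Ψ y) (Φ x) < η)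
    (hY : ∀ y, ∃ x, dist (Ψ y) (Φ x) < η) : HasFinePartition Y N M := by
  obtain ⟨k, U, hne, hdiam, hcover, hsep, hgap⟩ := h
  set V : Fin k → Set Y := fun i => Ψ ⁻¹' thickening η (Φ '' U i)
  have hVopen i : IsOpen (V i) := isOpen_thickening.preimage hΨ.continuous
  have hVdisj : Pairwise (Disjoint on V) := fun i j hij =>
    hΦ.disjoint_preimage_thickening_image fun x hx y hy => (hsep i j hij x hx y hy).le
  have hVcover : ⋃ i, V i = univ := by
    refine eq_univ_of_forall fun y => ?_
    obtain ⟨x, hxy⟩ := hY y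
    obtain ⟨i, hx⟩ := mem_iUnion.1 (hcover ▸ mem_univ x)
    exact mem_iUnion.2 ⟨i, mem_preimage_thickening_image.2 ⟨x, hx, hxy⟩⟩
  have hV i : ∀ y ∈ V i, ∃ x ∈ U i, dist (Ψ y) (Φ x) < η := fun _ => mem_preimage_thickening_image.1
  refine ⟨k, V, fun i => ?_, isClopen_of_iUnion_eq_univ hVopen hVdisj hVcover, fun i => ?_,
    hVcover, hVdisj, ?_⟩
  · obtain ⟨x, hx⟩ := hne i
    obtain ⟨y, hxy⟩ := hX x
    exact ⟨y, mem_preimage_thickening_image.2 ⟨x, hx, hxy⟩⟩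
  · obtain ⟨x, -⟩ := hne i
    obtain ⟨y, hxy⟩ := hX x
    exact (hΦ.diam_preimage_thickening_image_le hΨ (Bornology.IsBounded.all _)
      (dist_nonneg.trans hxy.le)).trans_lt (hdiam i)
  · intro i j i' j' hij hij' hne' y hy z hz y' hy' z' hz'
    obtain ⟨a, ha, hya⟩ := hV i y hy
    obtain ⟨b, hb, hzb⟩ := hV j z hz
    obtain ⟨a', ha', hya'⟩ := hV i' y' hy'
    obtain ⟨b', hb', hzb'⟩ := hV j' z' hz'
    have := hgap i j i' j' hij hij' hne' a ha b hb a' ha' b' hb'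
    have := hΦ.abs_dist_sub_dist_le hΨ y z a b
    have := hΦ.abs_dist_sub_dist_le hΨ y' z' a' b'
    have := abs_sub_le (dist a b) (dist y z) (dist a' b')
    have := abs_sub_le (dist y z) (dist y' z') (dist a' b')
    have := abs_sub_comm (dist a b) (dist y z)
    have := abs_sub_comm (dist a' b') (dist y' z')
    linarith

theorem HasRobustFinePartition.hasFinePartition_of_ghDist_lt [CompactSpace X] [Nonempty X]
    [CompactSpace Y] [Nonempty Y] (h : HasRobustFinePartition X N M η) (hXY : ghDist X Y < η) :
    HasFinePartition Y N M := by
  have hH := (hausdorffDist_optimal (X := X) (Y := Y)).symm ▸ hXY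
  have hfin := hausdorffEDist_ne_top_of_nonempty_of_bounded (range_nonempty _)
    (range_nonempty _) (isCompact_range (isometry_optimalGHInjl X Y).continuous).isBounded
    (isCompact_range (isometry_optimalGHInjr X Y).continuous).isBounded
  refine h.hasFinePartition_of_isometry (isometry_optimalGHInjl X Y)
    (isometry_optimalGHInjr X Y) (fun x => ?_) (fun y => ?_)
  · obtain ⟨_, ⟨y, rfl⟩, hxy⟩ := exists_dist_lt_of_hausdorffDist_lt (mem_range_self x) hH hfin
    exact ⟨y, dist_comm (optimalGHInjl X Y x) _ ▸ hxy⟩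
  · obtain ⟨_, ⟨x, rfl⟩, hxy⟩ := exists_dist_lt_of_hausdorffDist_lt' (mem_range_self y) hH hfin
    exact ⟨x, dist_comm (optimalGHInjl X Y x) _ ▸ hxy⟩

theorem isOpen_hasFinePartition_general (N M : ℕ) :
    IsOpen {p : {q : GromovHausdorff.GHSpace // TotallyDisconnectedSpace q.Rep} |
      HasFinePartition p.val.Rep N M} := by
  refine Metric.isOpen_iff.2 fun p hp => ?_
  obtain ⟨η, hη, hrobust⟩ := HasFinePartition.exists_hasRobustFinePartition hp
  refine ⟨η, hη, fun q hq => hrobust.hasFinePartition_of_ghDist_lt ?_⟩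
  rwa [mem_ball', Subtype.dist_eq, dist_ghDist] at hq

/-- For fixed positive integers `N` and `M`, the set `𝓜_{N,M}` of classes in `M₀` of compact
totally disconnected metric spaces admitting a fine partition as above is open in `M₀` with the
subspace topology inherited from the Gromov–Hausdorff space. -/
theorem isOpen_hasFinePartition (N M : ℕ) (hN : 0 < N) (hM : 0 < M) :
    IsOpen {p : {q : GromovHausdorff.GHSpace // TotallyDisconnectedSpace q.Rep} |
      HasFinePartition p.val.Rep N M} :=
  isOpen_hasFinePartition_general N M
end

section
/- Let (X, d) be a nonempty compact totally disconnected metric space. Then d is injective if and only if for every positive integer N there exists a positive integer M such that X admits a finite partition into nonempty clopen subsets U_1, …, U_k where each U_i has diameter less than 1/N, and for any indices with {i, j} ≠ {i', j'} as two-element sets (i ≠ j and i' ≠ j'), every x ∈ U_i, y ∈ U_j, x' ∈ U_{i'}, y' ∈ U_{j'} satisfy |d(x, y) − d(x', y')| > 1/M. -/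
open Metric Set Filter

section Partition

variable {X ι : Type*} {U : ι → Set X}

theorem eq_of_mem_of_pairwise_disjoint (hU : Pairwise (Function.onFun Disjoint U)) {i j : ι}
    {x : X} (hi : x ∈ U i) (hj : x ∈ U j) : i = j :=
  hU.eq (not_disjoint_iff.2 ⟨x, hi, hj⟩)

theorem pair_ne_pair_of_pairwise_disjoint (hU : Pairwise (Function.onFun Disjoint U))
    {i j i' j' : ι} (hij : i ≠ j) (hij' : i' ≠ j') (hne : ({i, j} : Set ι) ≠ {i', j'})
    {x y x' y' : X} (hx : x ∈ U i) (hy : y ∈ U j) (hx' : x' ∈ U i') (hy' : y' ∈ U j') :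
    x ≠ y ∧ x' ≠ y' ∧ ({x, y} : Set X) ≠ {x', y'} := by
  refine ⟨(hU hij).ne_of_mem hx hy, (hU hij').ne_of_mem hx' hy', fun hxy ↦ hne ?_⟩
  rcases pair_eq_pair_iff.1 hxy with ⟨rfl, rfl⟩ | ⟨rfl, rfl⟩
  · rw [eq_of_mem_of_pairwise_disjoint hU hx hx', eq_of_mem_of_pairwise_disjoint hU hy hy']
  · rw [eq_of_mem_of_pairwise_disjoint hU hx hy', eq_of_mem_of_pairwise_disjoint hU hy hx',
      pair_comm]

end Partition

section MetricSpace

variable {X : Type*} [MetricSpace X]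

theorem exists_clopen_partition_diam_lt [CompactSpace X] [TotallyDisconnectedSpace X]
    {ε : ℝ} (hε : 0 < ε) :
    ∃ (k : ℕ) (U : Fin k → Set X), (∀ i, (U i).Nonempty) ∧ (∀ i, IsClopen (U i)) ∧
      (∀ i, diam (U i) < ε) ∧ (⋃ i, U i) = univ ∧ Pairwise (Function.onFun Disjoint U) := by
  have hS : {p : X × X | dist p.1 p.2 < ε / 2} ∈ nhdsSet (diagonal X) :=
    nhdsSet_diagonal_le_uniformity (dist_mem_uniformity (half_pos hε))
  obtain ⟨k, D, hne, hsmall, hcover, hdisj⟩ :=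
    (ContinuousMap.id X).exists_disjoint_nonempty_clopen_cover_of_mem_nhds_diagonal hS
  refine ⟨k, fun i ↦ D i, fun i ↦ ?_, fun i ↦ (D i).isClopen, fun i ↦ ?_,
    univ_subset_iff.1 hcover, fun i j hij ↦ TopologicalSpace.Clopens.coe_disjoint.2 (hdisj hij)⟩
  · simpa [← SetLike.coe_set_eq, nonempty_iff_ne_empty] using hne i
  · calc diam (D i : Set X) ≤ ε / 2 :=
          diam_le_of_forall_dist_le (by positivity) fun y hy z hz ↦ (hsmall i y hy z hz).le
      _ < ε := half_lt_self hε

theorem InjectiveDist.eventually_one_div_lt_abs_dist_sub_dist (hinj : InjectiveDist X)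
    {A B A' B' : Set X} (hA : IsCompact A) (hB : IsCompact B) (hA' : IsCompact A')
    (hB' : IsCompact B')
    (hpair : ∀ x ∈ A, ∀ y ∈ B, ∀ x' ∈ A', ∀ y' ∈ B',
      x ≠ y ∧ x' ≠ y' ∧ ({x, y} : Set X) ≠ {x', y'}) :
    ∀ᶠ M : ℕ in atTop, ∀ x ∈ A, ∀ y ∈ B, ∀ x' ∈ A', ∀ y' ∈ B',
      1 / (M : ℝ) < |dist x y - dist x' y'| := by
  have hpos : ∀ q ∈ A ×ˢ B ×ˢ A' ×ˢ B',
      0 < |dist q.1 q.2.1 - dist q.2.2.1 q.2.2.2| := by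
    rintro ⟨x, y, x', y'⟩ ⟨hx, hy, hx', hy'⟩
    obtain ⟨hxy, hxy', hne⟩ := hpair x hx y hy x' hx' y' hy'
    exact abs_pos.2 (sub_ne_zero.2 fun hd ↦ hne (hinj x y x' y' hxy hxy' hd))
  obtain ⟨δ, hδ, hle⟩ := (hA.prod (hB.prod (hA'.prod hB'))).exists_forall_le'
    (by fun_prop) hpos
  filter_upwards [tendsto_one_div_atTop_nhds_zero_nat.eventually (gt_mem_nhds hδ)] with M hM
  intro x hx y hy x' hx' y' hy'
  exact hM.trans_le (hle (x, y, x', y') ⟨hx, hy, hx', hy'⟩)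

theorem InjectiveDist.exists_hasFinePartition [CompactSpace X] [TotallyDisconnectedSpace X]
    (hinj : InjectiveDist X) {N : ℕ} (hN : 0 < N) : ∃ M : ℕ, 0 < M ∧ HasFinePartition X N M := by
  obtain ⟨k, U, hnonempty, hclopen, hdiam, hcover, hdisj⟩ :=
    exists_clopen_partition_diam_lt (X := X) (one_div_pos.2 (Nat.cast_pos.2 hN))
  have hcpt : ∀ i, IsCompact (U i) := fun i ↦ (hclopen i).isClosed.isCompact
  have hgap : ∀ᶠ M : ℕ in atTop, ∀ i j i' j' : Fin k, i ≠ j → i' ≠ j' →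
      ({i, j} : Set (Fin k)) ≠ {i', j'} → ∀ x ∈ U i, ∀ y ∈ U j, ∀ x' ∈ U i', ∀ y' ∈ U j',
        1 / (M : ℝ) < |dist x y - dist x' y'| := by
    simp only [eventually_all]
    intro i j i' j' hij hij' hne
    exact hinj.eventually_one_div_lt_abs_dist_sub_dist (hcpt i) (hcpt j) (hcpt i') (hcpt j')
      fun x hx y hy x' hx' y' hy' ↦
        pair_ne_pair_of_pairwise_disjoint hdisj hij hij' hne hx hy hx' hy'
  obtain ⟨M, hM, hMpos⟩ := (hgap.and (eventually_gt_atTop 0)).exists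
  exact ⟨M, hMpos, k, U, hnonempty, hclopen, hdiam, hcover, hdisj, hM⟩

theorem HasFinePartition.min_max_dist_lt [CompactSpace X] {N M : ℕ} (h : HasFinePartition X N M)
    {x y x' y' : X} (hxy : 1 / (N : ℝ) < dist x y) (hd : dist x y = dist x' y') :
    min (max (dist x x') (dist y y')) (max (dist x y') (dist y x')) < 1 / N := by
  obtain ⟨k, U, -, -, hdiam, hcover, hdisj, hgap⟩ := h
  have hmem : ∀ z : X, ∃ i, z ∈ U i := fun z ↦ mem_iUnion.1 (hcover ▸ mem_univ z)
  have hclose : ∀ i, ∀ a ∈ U i, ∀ b ∈ U i, dist a b < 1 / N := fun i a ha b hb ↦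
    (dist_le_diam_of_mem isBounded_of_compactSpace ha hb).trans_lt (hdiam i)
  obtain ⟨i, hi⟩ := hmem x
  obtain ⟨j, hj⟩ := hmem y
  obtain ⟨i', hi'⟩ := hmem x'
  obtain ⟨j', hj'⟩ := hmem y'
  have hij : i ≠ j := by
    rintro rfl
    exact (hclose i x hi y hj).not_gt hxy
  have hij' : i' ≠ j' := by
    rintro rfl
    exact (hclose i' x' hi' y' hj').not_gt (hd ▸ hxy)
  have hpair : ({i, j} : Set (Fin k)) = {i', j'} := by
    by_contra hne
    have := hgap i j i' j' hij hij' hne x hi y hj x' hi' y' hj'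
    rw [hd, sub_self, abs_zero] at this
    exact this.not_ge (by positivity)
  rcases pair_eq_pair_iff.1 hpair with ⟨rfl, rfl⟩ | ⟨rfl, rfl⟩
  · exact min_lt_of_left_lt (max_lt (hclose i x hi x' hi') (hclose j y hj y' hj'))
  · exact min_lt_of_right_lt (max_lt (hclose i x hi y' hj') (hclose j y hj x' hi'))

end MetricSpace

theorem injectiveDist_iff_hasFinePartition_general (X : Type*) [MetricSpace X] [CompactSpace X]
    [TotallyDisconnectedSpace X] :
    InjectiveDist X ↔ ∀ N : ℕ, 0 < N → ∃ M : ℕ, 0 < M ∧ HasFinePartition X N M := by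
  refine ⟨fun hinj N hN ↦ hinj.exists_hasFinePartition hN, fun h x y x' y' hxy _ hd ↦ ?_⟩
  have hlim : min (max (dist x x') (dist y y')) (max (dist x y') (dist y x')) ≤ 0 := by
    refine ge_of_tendsto tendsto_one_div_atTop_nhds_zero_nat ?_
    filter_upwards [eventually_gt_atTop 0,
      tendsto_one_div_atTop_nhds_zero_nat.eventually (gt_mem_nhds (dist_pos.2 hxy))]
      with N hN hNxy
    obtain ⟨M, -, hM⟩ := h N hN
    exact (hM.min_max_dist_lt hNxy hd).le
  simp only [min_le_iff, max_le_iff, dist_le_zero] at hlim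
  rcases hlim with ⟨rfl, rfl⟩ | ⟨rfl, rfl⟩
  · rfl
  · exact pair_comm _ _

/-- A nonempty compact totally disconnected metric space has injective distance function if and
only if for every positive integer `N` there is a positive integer `M` such that the space
admits a fine partition as in the definition of `𝓜_{N,M}`. -/
theorem injectiveDist_iff_hasFinePartition (X : Type*) [MetricSpace X] [CompactSpace X]
    [TotallyDisconnectedSpace X] [Nonempty X] :
    InjectiveDist X ↔ ∀ N : ℕ, 0 < N → ∃ M : ℕ, 0 < M ∧ HasFinePartition X N M :=
  injectiveDist_iff_hasFinePartition_general X
end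

section
/- Let (X, d) be a metric space such that for every natural number n there exist n + 1 distinct points x_0, x_1, …, x_n in X and a real number r > 0 with d(x_i, x_j) = r for all i ≠ j (that is, X contains regular n-simplices for every n). Then for every natural number m there is no loose embedding of X into Euclidean space ℝ^m; in particular, X is not loosely embeddable. -/
/-!
A loose embedding sends equidistant points to equidistant points, so a regular `(m + 1)`-simplex
in `X` would give `m + 2` distinct equidistant points in `ℝ^m`. But equidistant points of a
Euclidean space are affinely independent: for weights `w` of total mass zero,
`‖∑ wᵢ pᵢ‖² = -½ ∑ᵢⱼ wᵢ wⱼ d(pᵢ, pⱼ)² = ½ s² ∑ wᵢ²`. An affinely independent family in `ℝ^m`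
has at most `m + 1` points.
-/

open Function

theorem IsLooseEmbedding.exists_pos_dist_eq {X Y ι : Type*} [MetricSpace X] [MetricSpace Y]
    {f : X → Y} (hf : IsLooseEmbedding f) {x : ι → X} (hx : Injective x) {r : ℝ}
    (hr : ∀ i j, i ≠ j → dist (x i) (x j) = r) :
    ∃ s, 0 < s ∧ ∀ i j, i ≠ j → dist (f (x i)) (f (x j)) = s := by
  by_cases hpair : ∃ i₀ i₁ : ι, i₀ ≠ i₁
  · obtain ⟨i₀, i₁, h₀₁⟩ := hpair
    refine ⟨dist (f (x i₀)) (f (x i₁)), dist_pos.2 (hf.1.ne (hx.ne h₀₁)), fun i j hij => ?_⟩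
    exact (hf.2.2 _ _ _ _).2 (by rw [hr i j hij, hr i₀ i₁ h₀₁])
  · exact ⟨1, one_pos, fun i j hij => absurd ⟨i, j, hij⟩ hpair⟩

open EuclideanGeometry in
theorem affineIndependent_of_dist_eq {V P ι : Type*} [NormedAddCommGroup V]
    [InnerProductSpace ℝ V] [MetricSpace P] [NormedAddTorsor V P] {p : ι → P} {s : ℝ}
    (hs : s ≠ 0) (hp : ∀ i j, i ≠ j → dist (p i) (p j) = s) : AffineIndependent ℝ p := by
  classical
  intro t w hw hv
  have hdist : ∀ i j, dist (p i) (p j) * dist (p i) (p j) = s ^ 2 - if i = j then s ^ 2 else 0 := by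
    intro i j
    by_cases hij : i = j
    · simp [hij]
    · simp [hp i j hij, hij, sq]
  have hsum : ∑ i ∈ t, ∑ j ∈ t, w i * w j * (dist (p i) (p j) * dist (p i) (p j)) =
      -(s ^ 2 * ∑ i ∈ t, w i ^ 2) := by
    simp only [hdist, mul_sub, Finset.sum_sub_distrib, mul_ite, mul_zero, Finset.sum_ite_eq,
      ← Finset.mul_sum, ← Finset.sum_mul, hw]
    simp [Finset.mul_sum, sq, mul_comm]
  have hsq : ∑ i ∈ t, w i ^ 2 = 0 := by
    have hinner := inner_weightedVSub p hw p hw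
    rw [hv, inner_zero_left, hsum] at hinner
    exact (mul_eq_zero.1 (by linarith)).resolve_left (pow_ne_zero 2 hs)
  intro i hi
  exact pow_eq_zero_iff two_ne_zero |>.1 <|
    (Finset.sum_eq_zero_iff_of_nonneg fun j _ => sq_nonneg (w j)).1 hsq i hi

/-- A metric space containing, for every `n`, a regular `n`-simplex (i.e. `n + 1` distinct
equidistant points) admits no loose embedding into any Euclidean space `ℝ^m`; in particular it
is not loosely embeddable. -/
theorem not_looselyEmbeddable_of_forall_regular_simplex {X : Type*} [MetricSpace X]
    (h : ∀ n : ℕ, ∃ (x : Fin (n + 1) → X) (r : ℝ), 0 < r ∧ Function.Injective x ∧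
      ∀ i j, i ≠ j → dist (x i) (x j) = r) :
    ∀ m : ℕ, ¬ ∃ f : X → EuclideanSpace ℝ (Fin m), IsLooseEmbedding f := by
  rintro m ⟨f, hf⟩
  obtain ⟨x, r, -, hx, hxr⟩ := h (m + 1)
  obtain ⟨s, hs, hfx⟩ := hf.exists_pos_dist_eq hx hxr
  have hcard := (affineIndependent_of_dist_eq hs.ne' hfx).card_le_finrank_succ
  have hspan := Submodule.finrank_le (vectorSpan ℝ (Set.range fun i => f (x i)))
  rw [Fintype.card_fin] at hcard
  rw [finrank_euclideanSpace_fin] at hspan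
  omega
end
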